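/- (Hodge decomposition) If ∂_r ∘ ∂_{r+1} = 0, then C_r decomposes as the orthogonal direct sum im(∂_{r+1}) ⊕ im(∂_r†) ⊕ ker(Δ_r), where Δ_r = ∂_{r+1}∂_{r+1}† + ∂_r†∂_r. -/

import Mathlib

/-! Since `⟪Δx, x⟫ = ‖∂_{r+1}† x‖² + ‖∂_r x‖²`, the kernel of `Δ_r` is the orthogonal complement of
`im ∂_{r+1} + im ∂_r†`, and `∂_r ∘ ∂_{r+1} = 0` says exactly that these two images are orthogonal. -/

open LinearMap

section Laplacian

variable {𝕜 E F G : Type*} [RCLike 𝕜]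
  [NormedAddCommGroup E] [InnerProductSpace 𝕜 E] [FiniteDimensional 𝕜 E]
  [NormedAddCommGroup F] [InnerProductSpace 𝕜 F] [FiniteDimensional 𝕜 F]
  [NormedAddCommGroup G] [InnerProductSpace 𝕜 G] [FiniteDimensional 𝕜 G]

theorem LinearMap.ker_adjoint_comp_self_add_adjoint_comp_self (A : E →ₗ[𝕜] F) (B : E →ₗ[𝕜] G) :
    ker (adjoint A ∘ₗ A + adjoint B ∘ₗ B) = ker A ⊓ ker B := by
  ext x
  simp only [Submodule.mem_inf, mem_ker]
  refine ⟨fun hx => ?_, fun ⟨hA, hB⟩ => by simp [hA, hB]⟩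
  have hnorm : ‖A x‖ ^ 2 + ‖B x‖ ^ 2 = 0 := by
    have := congrArg (fun y => RCLike.re (inner 𝕜 y x)) hx
    simpa [inner_add_left, adjoint_inner_left, inner_self_eq_norm_sq] using this
  constructor <;> rw [← norm_eq_zero] <;> nlinarith [sq_nonneg ‖A x‖, sq_nonneg ‖B x‖]

theorem LinearMap.ker_comp_adjoint_add_adjoint_comp (A : F →ₗ[𝕜] E) (B : E →ₗ[𝕜] G) :
    ker (A ∘ₗ adjoint A + adjoint B ∘ₗ B) = (range A ⊔ range (adjoint B))ᗮ := by
  have := ker_adjoint_comp_self_add_adjoint_comp_self (adjoint A) B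
  rw [adjoint_adjoint] at this
  rw [this, ← Submodule.inf_orthogonal, orthogonal_range, orthogonal_range, adjoint_adjoint]

end Laplacian

/-- (Hodge decomposition) If `∂_r ∘ ∂_{r+1} = 0`, then
`C_r = im(∂_{r+1}) ⊕ im(∂_r†) ⊕ ker(Δ_r)` as an orthogonal direct sum, where
`Δ_r = ∂_{r+1}∂_{r+1}† + ∂_r†∂_r`. -/
theorem hodge_decomposition
    {Crm Cr Crp : Type*}
    [NormedAddCommGroup Crm] [InnerProductSpace ℝ Crm] [FiniteDimensional ℝ Crm]
    [NormedAddCommGroup Cr] [InnerProductSpace ℝ Cr] [FiniteDimensional ℝ Cr]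
    [NormedAddCommGroup Crp] [InnerProductSpace ℝ Crp] [FiniteDimensional ℝ Crp]
    (dr : Cr →ₗ[ℝ] Crm) (drp : Crp →ₗ[ℝ] Cr)
    (h : dr ∘ₗ drp = 0) :
    (LinearMap.range drp ⊔ LinearMap.range (adjoint dr) ⊔
        ker (drp ∘ₗ (adjoint drp) + (adjoint dr) ∘ₗ dr) = ⊤) ∧
      LinearMap.range drp ≤ (LinearMap.range (adjoint dr))ᗮ ∧
      LinearMap.range drp ≤ (ker (drp ∘ₗ (adjoint drp) + (adjoint dr) ∘ₗ dr))ᗮ ∧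
      LinearMap.range (adjoint dr) ≤
        (ker (drp ∘ₗ (adjoint drp) + (adjoint dr) ∘ₗ dr))ᗮ := by
  rw [ker_comp_adjoint_add_adjoint_comp, Submodule.orthogonal_orthogonal]
  refine ⟨Submodule.sup_orthogonal_of_hasOrthogonalProjection, ?_, le_sup_left, le_sup_right⟩
  rw [orthogonal_range, adjoint_adjoint]
  exact range_le_ker_iff.mpr h
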